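/- For rows a₁, …, a_m of a matrix A (all nonzero) and any z ∈ ℝⁿ, ∑_{i=1}^m (‖a_i‖²/‖A‖_F²) · (⟨a_i, z⟩²/‖a_i‖²) = ‖Az‖²/‖A‖_F² ≥ ‖z‖²/(‖A⁻¹‖²‖A‖_F²) = ‖z‖²/R, provided A has full column rank. -/

import Mathlib

/-! Each summand collapses to `⟨aᵢ, z⟩² / ‖A‖_F²`, and these add up to `‖Az‖² / ‖A‖_F²`.
For the bound, full column rank makes `z ↦ Az` injective, hence bounded below on the
finite-dimensional space `ℝⁿ`; so the set whose infimum is `invNorm A` is nonempty and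
`‖z‖ ≤ invNorm A * ‖Az‖`. -/

open Finset

/-- Euclidean norm on `Fin k → ℝ`. -/
noncomputable def euclidNorm {k : ℕ} (v : Fin k → ℝ) : ℝ := Real.sqrt (∑ j, v j ^ 2)

/-- Standard inner product on `Fin k → ℝ`. -/
noncomputable def ip {k : ℕ} (v w : Fin k → ℝ) : ℝ := ∑ j, v j * w j

/-- Frobenius norm of a matrix. -/
noncomputable def frob {m n : ℕ} (A : Matrix (Fin m) (Fin n) ℝ) : ℝ :=
  Real.sqrt (∑ i, ∑ j, A i j ^ 2)

/-- `‖A⁻¹‖ = inf {M : M‖Az‖ ≥ ‖z‖ for all z}`. -/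
noncomputable def invNorm {m n : ℕ} (A : Matrix (Fin m) (Fin n) ℝ) : ℝ :=
  sInf {M : ℝ | ∀ z : Fin n → ℝ, euclidNorm z ≤ M * euclidNorm (A.mulVec z)}

theorem Matrix.mulVec_injective_of_rank_eq_card {R m n : Type*} [Field R] [Fintype n]
    {A : Matrix m n R} (hA : A.rank = Fintype.card n) : Function.Injective A.mulVec := by
  rw [Matrix.mulVec_injective_iff, linearIndependent_iff_card_eq_finrank_span]
  exact hA.symm.trans A.rank_eq_finrank_span_cols

theorem euclidNorm_eq_norm {k : ℕ} (v : Fin k → ℝ) : euclidNorm v = ‖WithLp.toLp 2 v‖ := by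
  simp [EuclideanSpace.norm_eq, euclidNorm]

theorem euclidNorm_nonneg {k : ℕ} (v : Fin k → ℝ) : 0 ≤ euclidNorm v := Real.sqrt_nonneg _

theorem euclidNorm_ne_zero {k : ℕ} {v : Fin k → ℝ} (hv : v ≠ 0) : euclidNorm v ≠ 0 := by
  simpa [euclidNorm_eq_norm] using hv

theorem euclidNorm_sq {k : ℕ} (v : Fin k → ℝ) : euclidNorm v ^ 2 = ∑ j, v j ^ 2 :=
  Real.sq_sqrt (sum_nonneg fun _ _ => sq_nonneg _)

section

variable {m n : ℕ} {A : Matrix (Fin m) (Fin n) ℝ}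

theorem sum_ip_sq_eq_euclidNorm_mulVec_sq (z : Fin n → ℝ) :
    ∑ i, ip (A i) z ^ 2 = euclidNorm (A.mulVec z) ^ 2 := by
  rw [euclidNorm_sq]
  rfl

theorem exists_euclidNorm_le_mul_euclidNorm_mulVec (hA : Function.Injective A.mulVec) :
    ∃ K : ℝ, ∀ z, euclidNorm z ≤ K * euclidNorm (A.mulVec z) := by
  have hker : LinearMap.ker (Matrix.toEuclideanLin A) = ⊥ :=
    LinearMap.ker_eq_bot.mpr fun x y h =>
      WithLp.ofLp_injective 2 (hA (by simpa using congrArg WithLp.ofLp h))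
  obtain ⟨K, -, hK⟩ := (Matrix.toEuclideanLin A).exists_antilipschitzWith hker
  refine ⟨K, fun z => ?_⟩
  simpa [euclidNorm_eq_norm] using hK.le_mul_norm (map_zero _) (WithLp.toLp 2 z)

theorem euclidNorm_le_invNorm_mul {K : ℝ} (hK : ∀ z, euclidNorm z ≤ K * euclidNorm (A.mulVec z))
    (z : Fin n → ℝ) : euclidNorm z ≤ invNorm A * euclidNorm (A.mulVec z) := by
  rcases (euclidNorm_nonneg (A.mulVec z)).eq_or_lt with hAz | hAz
  · simpa [← hAz] using hK z
  · rw [← div_le_iff₀ hAz]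
    exact le_csInf ⟨K, hK⟩ fun M hM => (div_le_iff₀ hAz).mpr (hM z)

end

/-- Key computation behind the one-step contraction: the expected squared normalized
residual equals `‖Az‖²/‖A‖_F²` and is at least `‖z‖²/R`. -/
theorem stmt_15 (m n : ℕ) (A : Matrix (Fin m) (Fin n) ℝ) (hrank : A.rank = n)
    (hrows : ∀ i, A i ≠ 0) (z : Fin n → ℝ) :
    (∑ i, (euclidNorm (A i) ^ 2 / frob A ^ 2) * (ip (A i) z ^ 2 / euclidNorm (A i) ^ 2) =
        euclidNorm (A.mulVec z) ^ 2 / frob A ^ 2) ∧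
      euclidNorm z ^ 2 / (invNorm A ^ 2 * frob A ^ 2) ≤ euclidNorm (A.mulVec z) ^ 2 / frob A ^ 2 := by
  constructor
  · have hterm (i : Fin m) : (euclidNorm (A i) ^ 2 / frob A ^ 2) *
        (ip (A i) z ^ 2 / euclidNorm (A i) ^ 2) = ip (A i) z ^ 2 / frob A ^ 2 := by
      have := euclidNorm_ne_zero (hrows i)
      field_simp
    rw [sum_congr rfl fun i _ => hterm i, ← sum_div, sum_ip_sq_eq_euclidNorm_mulVec_sq]
  · have hinj := A.mulVec_injective_of_rank_eq_card (hrank.trans (Fintype.card_fin n).symm)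
    obtain ⟨K, hK⟩ := exists_euclidNorm_le_mul_euclidNorm_mulVec hinj
    have hsq : euclidNorm z ^ 2 ≤ invNorm A ^ 2 * euclidNorm (A.mulVec z) ^ 2 := by
      rw [← mul_pow]
      exact pow_le_pow_left₀ (euclidNorm_nonneg z) (euclidNorm_le_invNorm_mul hK z) 2
    rw [← div_div]
    gcongr
    exact div_le_of_le_mul₀ (sq_nonneg _) (sq_nonneg _) (by rwa [mul_comm])
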